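/- arXiv:1810.02815 — 2 statements merged into one kernel-verified Lean document; each statement's English description precedes it below -/
import Mathlib

section
/- Existence of an efficient competitive equilibrium: under the market-model assumptions (each W_i differentiable and concave, each K_i nonempty and compact, C_0 differentiable and convex), there exist points x_i* ∈ K_i for i = 1,…,N, a supply vector q^S* := Σ_i S_i x_i* ∈ ℝ^H, and a price vector p := ∇C_0(q^S*) ∈ ℝ^H such that: (a) for every i, x_i* maximizes x ↦ W_i(x) − ⟨p, S_i x⟩ over K_i; (b) q^S* maximizes q ↦ ⟨p, q⟩ − C_0(q) over ℝ^H; and (c) (x_1*,…,x_N*) maximizes the social welfare (x_1,…,x_N) ↦ Σ_i W_i(x_i) − C_0(Σ_i S_i x_i) over K_1 × ⋯ × K_N. In particular, ((x_i*)_i, q^S*, p) is a competitive equilibrium whose allocation is efficient. -/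
/-!
Concave functions on a finite-dimensional space are continuous, so social welfare has a maximizer
`x*` on the compact product of the constraint sets; put `q* = ∑ i, S_i x*_i` and `p = ∇C₀(q*)`. Moving prosumer `i` alone from `x*_i` towards
`y` by a fraction `t`, concavity makes the utility gain at least `t (W_i y - W_i x*_i)`, while
welfare optimality bounds it by the cost increase `C₀(q* + t S_i (y - x*_i)) - C₀(q*)`. Dividing
by `t` and letting `t → 0⁺` gives `W_i y - W_i x*_i ≤ ⟪p, S_i y - S_i x*_i⟫`, which is payoff
maximality. Profit maximality of `q*` is the gradient inequality for the convex `C₀`.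
-/

open scoped RealInnerProductSpace

/-- The aggregation map `S_i`: sums the appliance blocks of a prosumer's consumption
vector, `S_i x = ∑_a x_{·,a}`, giving a vector of per-period totals. -/
noncomputable def aggr {a h' : Type*} [Fintype a] [Fintype h']
    (x : EuclideanSpace ℝ (a × h')) : EuclideanSpace ℝ h' :=
  WithLp.toLp 2 (fun t => ∑ i : a, x (i, t))

/-- The polyhedral constraint set `K = {x : A x ≤ h}` (componentwise inequalities). -/
def Kset {m' n' : Type*} [Fintype m'] [Fintype n'] (A : Matrix m' n' ℝ) (h : m' → ℝ) :
    Set (EuclideanSpace ℝ n') := {x | ∀ l, ∑ j, A l j * x j ≤ h l}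

open Set

section Market

variable {a h' m' n' : Type*} [Fintype a] [Fintype h'] [Fintype m'] [Fintype n']

noncomputable def aggrCLM : EuclideanSpace ℝ (a × h') →L[ℝ] EuclideanSpace ℝ h' :=
  LinearMap.toContinuousLinearMap
    { toFun := aggr
      map_add' := fun x y => by ext t; simp [aggr, Finset.sum_add_distrib]
      map_smul' := fun c x => by ext t; simp [aggr, Finset.mul_sum] }

@[simp]
lemma aggrCLM_apply (x : EuclideanSpace ℝ (a × h')) : aggrCLM x = aggr x := rfl

lemma convex_Kset (A : Matrix m' n' ℝ) (h : m' → ℝ) : Convex ℝ (Kset A h) := by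
  have hK : Kset A h = ⋂ l, {x : EuclideanSpace ℝ n' | ∑ j, A l j * x j ≤ h l} := by
    ext; simp [Kset]
  rw [hK]
  refine convex_iInter fun l => convex_halfSpace_le ⟨fun x y => ?_, fun c x => ?_⟩ _
  · simp [mul_add, Finset.sum_add_distrib]
  · simp [Finset.mul_sum, mul_left_comm]

end Market

lemma Finset.sum_apply_update {ι : Type*} [Fintype ι] [DecidableEq ι] {β : ι → Type*}
    {M : Type*} [AddCommGroup M] (f : ∀ i, β i → M) (x : ∀ i, β i) (i : ι) (y : β i) :
    ∑ j, f j (Function.update x i y j) = ∑ j, f j (x j) + (f i y - f i (x i)) := by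
  simp_rw [Function.apply_update f]
  rw [Finset.sum_update_of_mem (Finset.mem_univ i),
    ← Finset.add_sum_erase _ (fun j => f j (x j)) (Finset.mem_univ i),
    Finset.sdiff_singleton_eq_erase]
  abel

section FirstOrder

variable {E F : Type*} [NormedAddCommGroup E] [NormedSpace ℝ E]
  [NormedAddCommGroup F] [InnerProductSpace ℝ F] [CompleteSpace F]

lemma HasGradientAt.hasDerivAt_comp_lineMap {f : F → ℝ} {f' x y : F}
    (hf : HasGradientAt f f' x) :
    HasDerivAt (fun t : ℝ => f (AffineMap.lineMap x y t)) ⟪f', y - x⟫ 0 := by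
  have hf' : HasFDerivAt f (InnerProductSpace.toDual ℝ F f') (AffineMap.lineMap x y (0 : ℝ)) := by
    simpa using hf.hasFDerivAt
  have := hf'.comp_hasDerivAt (𝕜 := ℝ) (0 : ℝ) AffineMap.hasDerivAt_lineMap
  simp only [InnerProductSpace.toDual_apply_apply] at this
  exact this

lemma ConvexOn.isMaxOn_inner_gradient_sub {C : F → ℝ} {s : Set F} {q : F} (hC : ConvexOn ℝ s C)
    (hq : q ∈ s) (hCq : DifferentiableAt ℝ C q) :
    IsMaxOn (fun q' => ⟪gradient C q, q'⟫ - C q') s q := by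
  intro q' hq'
  have hline := (hC.comp_affineMap (AffineMap.lineMap q q')).le_slope_of_hasDerivAt
    (x := 0) (y := 1) (by simpa) (by simpa) zero_lt_one hCq.hasGradientAt.hasDerivAt_comp_lineMap
  simp only [Function.comp_def, slope_def_field, AffineMap.lineMap_apply_one,
    AffineMap.lineMap_apply_zero, inner_sub_right] at hline
  simp only [mem_ofPred_eq]
  linarith

lemma ConcaveOn.isMaxOn_sub_inner_gradient {W : E → ℝ} {C : F → ℝ} {K : Set E} {x : E} {q : F}
    (L : E →L[ℝ] F) (hW : ConcaveOn ℝ K W) (hx : x ∈ K) (hCq : DifferentiableAt ℝ C q)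
    (hmax : IsMaxOn (fun y => W y - C (q + L (y - x))) K x) :
    IsMaxOn (fun y => W y - ⟪gradient C q, L y⟫) K x := by
  intro y hy
  set v := L (y - x)
  have hslope : ∀ t ∈ Ioo (0 : ℝ) 1,
      W y - W x ≤ slope (fun t => C (AffineMap.lineMap q (q + v) t)) 0 t := by
    rintro t ⟨ht0, ht1⟩
    have hz : AffineMap.lineMap x y t ∈ K := hW.1.lineMap_mem hx hy ⟨ht0.le, ht1.le⟩
    have hchord : (1 - t) * W x + t * W y ≤ W (AffineMap.lineMap x y t) := by
      simpa [AffineMap.lineMap_apply_module] using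
        hW.2 hx hy (sub_nonneg.2 ht1.le) ht0.le (sub_add_cancel 1 t)
    have hcost : q + L (AffineMap.lineMap x y t - x) = AffineMap.lineMap q (q + v) t := by
      simp [v, AffineMap.lineMap_apply, map_smul, add_comm]
    have hwelfare := hmax hz
    simp only [mem_ofPred_eq, hcost, sub_self, map_zero, add_zero] at hwelfare
    rw [slope_def_field, le_div_iff₀ (by simpa using ht0)]
    simp only [AffineMap.lineMap_apply_zero, sub_zero]
    linarith
  have hmarginal : W y - W x ≤ ⟪gradient C q, v⟫ := by
    have hderiv := hCq.hasGradientAt.hasDerivAt_comp_lineMap (y := q + v)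
    rw [add_sub_cancel_left] at hderiv
    refine ge_of_tendsto
      ((hasDerivWithinAt_iff_tendsto_slope' self_notMem_Ioi).mp hderiv.hasDerivWithinAt) ?_
    filter_upwards [Ioo_mem_nhdsGT one_pos] with t ht using hslope t ht
  simp only [mem_ofPred_eq, v, map_sub, inner_sub_right] at hmarginal ⊢
  linarith

end FirstOrder

section Welfare

variable {ι : Type*} [Fintype ι] {E : ι → Type*} [∀ i, NormedAddCommGroup (E i)]
  [∀ i, NormedSpace ℝ (E i)] {F : Type*} [NormedAddCommGroup F] [NormedSpace ℝ F]
  (W : ∀ i, E i → ℝ) (S : ∀ i, E i →L[ℝ] F) (C : F → ℝ)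

def socialWelfare (x : ∀ i, E i) : ℝ := ∑ i, W i (x i) - C (∑ i, S i (x i))

lemma exists_isMaxOn_socialWelfare {K : ∀ i, Set (E i)} (hK : ∀ i, IsCompact (K i))
    (hKne : ∀ i, (K i).Nonempty) (hW : ∀ i, ContinuousOn (W i) (K i)) (hC : Continuous C) :
    ∃ x ∈ univ.pi K, IsMaxOn (socialWelfare W S C) (univ.pi K) x := by
  refine (isCompact_univ_pi hK).exists_isMaxOn (univ_pi_nonempty_iff.2 hKne) ?_
  have hcoord (i : ι) : MapsTo (fun x : ∀ i, E i => x i) (univ.pi K) (K i) :=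
    fun _ hx => hx i (mem_univ i)
  refine (continuousOn_finsetSum _ fun i _ =>
    (hW i).comp (continuous_apply i).continuousOn (hcoord i)).sub ?_
  exact (hC.comp (continuous_finsetSum _ fun i _ =>
    (S i).continuous.comp (continuous_apply i))).continuousOn

variable {W S C} in
lemma IsMaxOn.isMaxOn_update_socialWelfare {K : ∀ i, Set (E i)} {x : ∀ i, E i}
    (hx : IsMaxOn (socialWelfare W S C) (univ.pi K) x) (hxK : x ∈ univ.pi K) (i : ι) :
    IsMaxOn (fun y => W i y - C (∑ j, S j (x j) + S i (y - x i))) (K i) (x i) := by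
  classical
  intro y hy
  have := hx ((update_mem_pi_iff_of_mem hxK).2 fun _ => hy)
  simp only [mem_ofPred_eq, socialWelfare, Finset.sum_apply_update, map_sub, sub_self, map_zero,
    add_zero] at this ⊢
  linarith

end Welfare

theorem exists_efficient_competitive_equilibrium_general
    (N H : ℕ) (nA : Fin N → ℕ) (m : Fin N → ℕ)
    (A : ∀ i, Matrix (Fin (m i)) (Fin (nA i) × Fin H) ℝ)
    (h : ∀ i, Fin (m i) → ℝ)
    (W : ∀ i, EuclideanSpace ℝ (Fin (nA i) × Fin H) → ℝ)
    (C0 : EuclideanSpace ℝ (Fin H) → ℝ)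
    (hWconc : ∀ i, ConcaveOn ℝ Set.univ (W i))
    (hKne : ∀ i, (Kset (A i) (h i)).Nonempty)
    (hKcpt : ∀ i, IsCompact (Kset (A i) (h i)))
    (hC0diff : Differentiable ℝ C0)
    (hC0conv : ConvexOn ℝ Set.univ C0) :
    ∃ (x : ∀ i, EuclideanSpace ℝ (Fin (nA i) × Fin H))
      (qS p : EuclideanSpace ℝ (Fin H)),
      (∀ i, x i ∈ Kset (A i) (h i)) ∧
      qS = ∑ i, aggr (x i) ∧
      p = gradient C0 qS ∧
      (∀ i, ∀ y ∈ Kset (A i) (h i),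
        W i y - ⟪p, aggr y⟫ ≤ W i (x i) - ⟪p, aggr (x i)⟫) ∧
      (∀ q : EuclideanSpace ℝ (Fin H), ⟪p, q⟫ - C0 q ≤ ⟪p, qS⟫ - C0 qS) ∧
      (∀ y : ∀ i, EuclideanSpace ℝ (Fin (nA i) × Fin H),
        (∀ i, y i ∈ Kset (A i) (h i)) →
        ∑ i, W i (y i) - C0 (∑ i, aggr (y i)) ≤ ∑ i, W i (x i) - C0 qS) := by
  obtain ⟨x, hxK, hmax⟩ := exists_isMaxOn_socialWelfare W (fun _ => aggrCLM) C0 hKcpt hKne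
    (fun i => ((hWconc i).continuousOn isOpen_univ).mono (subset_univ _)) hC0diff.continuous
  refine ⟨x, _, _, fun i => hxK i (mem_univ i), rfl, rfl, fun i y hy => ?_, fun q => ?_,
    fun y hy => hmax fun i _ => hy i⟩
  · simpa using ((hWconc i).subset (subset_univ _) (convex_Kset _ _)).isMaxOn_sub_inner_gradient
      aggrCLM (hxK i (mem_univ i)) (hC0diff _)
      (by simpa using hmax.isMaxOn_update_socialWelfare hxK i) hy
  · exact hC0conv.isMaxOn_inner_gradient_sub (mem_univ _) (hC0diff _) (mem_univ q)

/-- Existence of an efficient competitive equilibrium: under the market-model assumptions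
(each `W i` differentiable and concave, each polyhedral `K_i = {x : A_i x ≤ h_i}` nonempty
and compact, `C0` differentiable and convex), there exist `x* ∈ Π i, K_i`, a supply vector
`q^S* = ∑ i, S_i x_i*`, and a price `p = ∇C0(q^S*)` such that: (a) each `x_i*` maximizes
the payoff `y ↦ W_i(y) − ⟨p, S_i y⟩` over `K_i`; (b) `q^S*` maximizes the profit
`q ↦ ⟨p, q⟩ − C0(q)` over `ℝ^H`; and (c) `x*` maximizes the social welfare
`y ↦ ∑ i W_i(y_i) − C0(∑ i S_i y_i)` over `Π i, K_i`. In particular `(x*, q^S*, p)` is a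
competitive equilibrium whose allocation is efficient. -/
theorem exists_efficient_competitive_equilibrium
    (N H : ℕ) (nA : Fin N → ℕ) (m : Fin N → ℕ)
    (A : ∀ i, Matrix (Fin (m i)) (Fin (nA i) × Fin H) ℝ)
    (h : ∀ i, Fin (m i) → ℝ)
    (W : ∀ i, EuclideanSpace ℝ (Fin (nA i) × Fin H) → ℝ)
    (C0 : EuclideanSpace ℝ (Fin H) → ℝ)
    (hWdiff : ∀ i, Differentiable ℝ (W i))
    (hWconc : ∀ i, ConcaveOn ℝ Set.univ (W i))
    (hKne : ∀ i, (Kset (A i) (h i)).Nonempty)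
    (hKcpt : ∀ i, IsCompact (Kset (A i) (h i)))
    (hC0diff : Differentiable ℝ C0)
    (hC0conv : ConvexOn ℝ Set.univ C0) :
    ∃ (x : ∀ i, EuclideanSpace ℝ (Fin (nA i) × Fin H))
      (qS p : EuclideanSpace ℝ (Fin H)),
      (∀ i, x i ∈ Kset (A i) (h i)) ∧
      qS = ∑ i, aggr (x i) ∧
      p = gradient C0 qS ∧
      (∀ i, ∀ y ∈ Kset (A i) (h i),
        W i y - ⟪p, aggr y⟫ ≤ W i (x i) - ⟪p, aggr (x i)⟫) ∧
      (∀ q : EuclideanSpace ℝ (Fin H), ⟪p, q⟫ - C0 q ≤ ⟪p, qS⟫ - C0 qS) ∧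
      (∀ y : ∀ i, EuclideanSpace ℝ (Fin (nA i) × Fin H),
        (∀ i, y i ∈ Kset (A i) (h i)) →
        ∑ i, W i (y i) - C0 (∑ i, aggr (y i)) ≤ ∑ i, W i (x i) - C0 qS) :=
  exists_efficient_competitive_equilibrium_general N H nA m A h W C0 hWconc hKne hKcpt hC0diff
    hC0conv
end

section
/- KKT points of the social-welfare problem yield competitive equilibria: suppose each W_i is differentiable and concave and C_0 is differentiable and convex. Suppose for each i there are x_i ∈ ℝ^{n_i} and λ_i ∈ ℝ^{m_i} satisfying primal feasibility A_i x_i ≤ h_i, dual feasibility λ_i ≥ 0, complementary slackness (λ_i)_l · ((A_i x_i − h_i)_l) = 0 for every row l, and the stationarity condition ∇W_i(x_i) = A_iᵀ λ_i + S_iᵀ p, where p := ∇C_0(Σ_i S_i x_i). Then, setting q^S := Σ_i S_i x_i, each x_i maximizes x ↦ W_i(x) − ⟨p, S_i x⟩ over K_i = {x : A_i x ≤ h_i}, and q^S maximizes q ↦ ⟨p, q⟩ − C_0(q) over ℝ^H; that is, ((x_i)_i, q^S, p) is a competitive equilibrium. -/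
open scoped RealInnerProductSpace

/-- `Aᵀ λ = ∑ l, λ_l a_l` where `a_l` is the `l`-th row of `A`, as a Euclidean vector. -/
noncomputable def transMul {m' n' : Type*} [Fintype m'] [Fintype n']
    (A : Matrix m' n' ℝ) (lam : m' → ℝ) : EuclideanSpace ℝ n' :=
  WithLp.toLp 2 (fun i => ∑ l, lam l * A l i)

/-- The adjoint `S_iᵀ` of the aggregation map applied to a price vector `p`: it replicates
`p` across appliance blocks, `(S_iᵀ p)_{a,t} = p_t`. -/
noncomputable def liftPrice {a h' : Type*} [Fintype a] [Fintype h']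
    (p : EuclideanSpace ℝ h') : EuclideanSpace ℝ (a × h') :=
  WithLp.toLp 2 (fun j : a × h' => p j.2)

/-!
Concavity turns the KKT conditions into a global optimality certificate. The tangent-plane
inequality bounds `W_i y - W_i x_i` by `⟪∇W_i x_i, y - x_i⟫ = ⟪A_iᵀ λ_i, y - x_i⟫ + ⟪p, S_i (y - x_i)⟫`,
and complementary slackness turns the first term into `⟪λ_i, A_i y - h_i⟫ ≤ 0` for feasible `y`.
The company's problem is unconstrained, and the tangent-plane inequality for the convex `C_0` at
`q^S`, with slope `p = ∇C_0 q^S`, is exactly its optimality.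
-/

open Set

section FirstOrder

variable {E : Type*} [NormedAddCommGroup E] [NormedSpace ℝ E] {s : Set E} {f : E → ℝ}
  {f' : E →L[ℝ] ℝ} {x y : E}

theorem ConvexOn.add_fderiv_sub_le (hf : ConvexOn ℝ s f) (hx : x ∈ s) (hy : y ∈ s)
    (hf' : HasFDerivAt f f' x) : f x + f' (y - x) ≤ f y := by
  set L : ℝ →ᵃ[ℝ] E := AffineMap.lineMap x y
  have hline : ConvexOn ℝ (L ⁻¹' s) (f ∘ L) := hf.comp_affineMap L
  have hderiv : HasDerivAt (f ∘ L) (f' (y - x)) 0 := by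
    have hf'L : HasFDerivAt f f' (L 0) := by simpa [L] using hf'
    exact hf'L.comp_hasDerivAt 0 AffineMap.hasDerivAt_lineMap
  have hL0 : L 0 = x := AffineMap.lineMap_apply_zero x y
  have hL1 : L 1 = y := AffineMap.lineMap_apply_one x y
  have hslope := hline.le_slope_of_hasDerivAt (by simpa [hL0] using hx)
    (by simpa [hL1] using hy) zero_lt_one hderiv
  simp only [slope_def_field, Function.comp_apply, hL0, hL1, sub_zero, div_one] at hslope
  linarith

theorem ConcaveOn.le_add_fderiv_sub (hf : ConcaveOn ℝ s f) (hx : x ∈ s) (hy : y ∈ s)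
    (hf' : HasFDerivAt f f' x) : f y ≤ f x + f' (y - x) := by
  have := hf.neg.add_fderiv_sub_le hx hy hf'.neg
  simp only [Pi.neg_apply, neg_apply] at this
  linarith

end FirstOrder

section Gradient

variable {E : Type*} [NormedAddCommGroup E] [InnerProductSpace ℝ E] [CompleteSpace E]
  {f : E → ℝ} {g x : E}

theorem ConvexOn.add_inner_gradient_sub_le (hf : ConvexOn ℝ univ f) (hg : HasGradientAt f g x)
    (y : E) : f x + ⟪g, y - x⟫ ≤ f y :=
  hf.add_fderiv_sub_le (mem_univ x) (mem_univ y) hg.hasFDerivAt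

theorem ConcaveOn.le_add_inner_gradient_sub (hf : ConcaveOn ℝ univ f) (hg : HasGradientAt f g x)
    (y : E) : f y ≤ f x + ⟪g, y - x⟫ :=
  hf.le_add_fderiv_sub (mem_univ x) (mem_univ y) hg.hasFDerivAt

end Gradient

theorem inner_liftPrice {a h' : Type*} [Fintype a] [Fintype h'] (p : EuclideanSpace ℝ h')
    (z : EuclideanSpace ℝ (a × h')) : ⟪liftPrice p, z⟫ = ⟪p, aggr z⟫ := by
  simp only [liftPrice, aggr, PiLp.inner_apply, RCLike.inner_apply, conj_trivial,
    Fintype.sum_prod_type, Finset.sum_mul]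
  exact Finset.sum_comm

section KKT

variable {m' n' : Type*} [Fintype m'] [Fintype n'] {A : Matrix m' n' ℝ} {h : m' → ℝ}
  {lam : m' → ℝ} {x y : EuclideanSpace ℝ n'}

theorem inner_transMul (A : Matrix m' n' ℝ) (lam : m' → ℝ) (z : EuclideanSpace ℝ n') :
    ⟪transMul A lam, z⟫ = ∑ l, lam l * ∑ j, A l j * z j := by
  simp only [transMul, PiLp.inner_apply, RCLike.inner_apply, conj_trivial, Finset.mul_sum]
  rw [Finset.sum_comm]
  exact Finset.sum_congr rfl fun l _ => Finset.sum_congr rfl fun j _ => by ring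

theorem inner_transMul_sub_nonpos (hlam : ∀ l, 0 ≤ lam l)
    (hcs : ∀ l, lam l * ((∑ j, A l j * x j) - h l) = 0) (hy : y ∈ Kset A h) :
    ⟪transMul A lam, y - x⟫ ≤ 0 := by
  rw [inner_transMul]
  refine Finset.sum_nonpos fun l _ => ?_
  have hrow : ∑ j, A l j * (y - x) j = (∑ j, A l j * y j - h l) - (∑ j, A l j * x j - h l) := by
    simp only [PiLp.sub_apply, mul_sub, Finset.sum_sub_distrib]
    ring
  rw [hrow, mul_sub, hcs l, sub_zero]
  exact mul_nonpos_of_nonneg_of_nonpos (hlam l) (sub_nonpos.mpr (hy l))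

theorem ConcaveOn.isMaxOn_sub_inner_of_kkt {f : EuclideanSpace ℝ n' → ℝ}
    (hf : ConcaveOn ℝ univ f) {c : EuclideanSpace ℝ n'}
    (hgrad : HasGradientAt f (transMul A lam + c) x) (hlam : ∀ l, 0 ≤ lam l)
    (hcs : ∀ l, lam l * ((∑ j, A l j * x j) - h l) = 0) :
    IsMaxOn (fun y => f y - ⟪c, y⟫) (Kset A h) x := by
  intro y hy
  have htangent := hf.le_add_inner_gradient_sub hgrad y
  have hslack := inner_transMul_sub_nonpos hlam hcs hy
  simp only [inner_add_left, inner_sub_right] at htangent hslack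
  show f y - ⟪c, y⟫ ≤ f x - ⟪c, x⟫
  linarith

end KKT

theorem kkt_implies_competitive_equilibrium_general
    (N H : ℕ) (nA : Fin N → ℕ) (m : Fin N → ℕ)
    (A : ∀ i, Matrix (Fin (m i)) (Fin (nA i) × Fin H) ℝ)
    (h : ∀ i, Fin (m i) → ℝ)
    (W : ∀ i, EuclideanSpace ℝ (Fin (nA i) × Fin H) → ℝ)
    (C0 : EuclideanSpace ℝ (Fin H) → ℝ)
    (hWdiff : ∀ i, Differentiable ℝ (W i))
    (hWconc : ∀ i, ConcaveOn ℝ Set.univ (W i))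
    (hC0diff : Differentiable ℝ C0)
    (hC0conv : ConvexOn ℝ Set.univ C0)
    (x : ∀ i, EuclideanSpace ℝ (Fin (nA i) × Fin H))
    (lam : ∀ i, Fin (m i) → ℝ)
    (qS : EuclideanSpace ℝ (Fin H))
    (p : EuclideanSpace ℝ (Fin H)) (hp : p = gradient C0 qS)
    (hdualfeas : ∀ i l, 0 ≤ lam i l)
    (hcs : ∀ i l, lam i l * ((∑ j, A i l j * x i j) - h i l) = 0)
    (hstat : ∀ i, gradient (W i) (x i) = transMul (A i) (lam i) + liftPrice p) :
    (∀ i, ∀ y ∈ Kset (A i) (h i),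
        W i y - ⟪p, aggr y⟫ ≤ W i (x i) - ⟪p, aggr (x i)⟫) ∧
      ∀ q : EuclideanSpace ℝ (Fin H), ⟪p, q⟫ - C0 q ≤ ⟪p, qS⟫ - C0 qS := by
  refine ⟨fun i y hy => ?_, fun q => ?_⟩
  · have hgrad : HasGradientAt (W i) (transMul (A i) (lam i) + liftPrice p) (x i) :=
      hstat i ▸ (hWdiff i (x i)).hasGradientAt
    simpa only [inner_liftPrice] using
      isMaxOn_iff.mp ((hWconc i).isMaxOn_sub_inner_of_kkt hgrad (hdualfeas i) (hcs i)) y hy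
  · have hgrad : HasGradientAt C0 p qS := hp ▸ (hC0diff qS).hasGradientAt
    have htangent := hC0conv.add_inner_gradient_sub_le hgrad q
    rw [inner_sub_right] at htangent
    linarith

/-- KKT points of the social-welfare problem yield competitive equilibria: if each `W i`
is differentiable and concave, `C0` is differentiable and convex, and for every prosumer
`i` the point `x i` together with the multiplier `lam i` satisfies primal feasibility,
dual feasibility, complementary slackness, and the stationarity condition
`∇W_i(x_i) = A_iᵀ λ_i + S_iᵀ p` where `p = ∇C0(∑ i, S_i x_i)`, then each `x i` maximizes
prosumer `i`'s payoff `y ↦ W_i(y) − ⟨p, S_i y⟩` over `K_i`, and `q^S = ∑ i, S_i x_i`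
maximizes the utility company's profit `q ↦ ⟨p, q⟩ − C0(q)`; i.e. `((x i)_i, q^S, p)` is a
competitive equilibrium. -/
theorem kkt_implies_competitive_equilibrium
    (N H : ℕ) (nA : Fin N → ℕ) (m : Fin N → ℕ)
    (A : ∀ i, Matrix (Fin (m i)) (Fin (nA i) × Fin H) ℝ)
    (h : ∀ i, Fin (m i) → ℝ)
    (W : ∀ i, EuclideanSpace ℝ (Fin (nA i) × Fin H) → ℝ)
    (C0 : EuclideanSpace ℝ (Fin H) → ℝ)
    (hWdiff : ∀ i, Differentiable ℝ (W i))
    (hWconc : ∀ i, ConcaveOn ℝ Set.univ (W i))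
    (hC0diff : Differentiable ℝ C0)
    (hC0conv : ConvexOn ℝ Set.univ C0)
    (x : ∀ i, EuclideanSpace ℝ (Fin (nA i) × Fin H))
    (lam : ∀ i, Fin (m i) → ℝ)
    (qS : EuclideanSpace ℝ (Fin H)) (hqS : qS = ∑ i, aggr (x i))
    (p : EuclideanSpace ℝ (Fin H)) (hp : p = gradient C0 qS)
    (hprimal : ∀ i, x i ∈ Kset (A i) (h i))
    (hdualfeas : ∀ i l, 0 ≤ lam i l)
    (hcs : ∀ i l, lam i l * ((∑ j, A i l j * x i j) - h i l) = 0)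
    (hstat : ∀ i, gradient (W i) (x i) = transMul (A i) (lam i) + liftPrice p) :
    (∀ i, ∀ y ∈ Kset (A i) (h i),
        W i y - ⟪p, aggr y⟫ ≤ W i (x i) - ⟪p, aggr (x i)⟫) ∧
      ∀ q : EuclideanSpace ℝ (Fin H), ⟪p, q⟫ - C0 q ≤ ⟪p, qS⟫ - C0 qS :=
  kkt_implies_competitive_equilibrium_general N H nA m A h W C0 hWdiff hWconc hC0diff hC0conv x lam
    qS p hp hdualfeas hcs hstat
end
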